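/- Fix an integer n ≥ 1 and let ζ := exp(2πi/n). Let q : ℕ → ℤ/nℤ → ℝ[x,x⁻¹] be such that each q_{j,g} has nonnegative coefficients and Σ_{g∈ℤ/nℤ} q_{j,g}(1) = 1 for every j, and set p_{k,j} := Σ_{g∈ℤ/nℤ} ζ^{(k·g)}·q_{j,g} ∈ ℂ[x,x⁻¹] for k ∈ ℤ/nℤ. Assume: (a) weak ergodicity: for all k ≠ l in ℤ/nℤ, the series Σ_j (Σ_{(g,h) : (k−l)·(g−h) ≠ 0 in ℤ/nℤ} q_{j,g}(1)·q_{j,h}(1)) diverges; and (b) the squared sequence is hollow: for every k ≠ 0 and every j₀, ‖∏_{j=j₀}^{j₀+d} p_{k,j}²‖₁ tends to 0 as d → ∞. Then for every l ≠ 0 in ℤ/nℤ and every j₀, the l¹ norms ‖Σ_{k∈ℤ/nℤ} ∏_{j=j₀}^{j₀+d} (p_{k,j} · p_{l,j})‖₁ tend to 0 as d → ∞. -/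

import Mathlib

open Finsupp Filter

/-- The coefficients of a real Laurent polynomial. -/
def lcoeff (p : AddMonoidAlgebra ℝ ℤ) : ℤ →₀ ℝ := p.coeff

/-- The coefficients of a complex Laurent polynomial. -/
def lcoeffC (p : AddMonoidAlgebra ℂ ℤ) : ℤ →₀ ℂ := p.coeff

/-- The `l¹` norm of a complex Laurent polynomial. -/
noncomputable def l1C (p : AddMonoidAlgebra ℂ ℤ) : ℝ := (lcoeffC p).sum fun _ c => ‖c‖

/-- Evaluation of a real Laurent polynomial at `x = 1`. -/
noncomputable def ev1 (p : AddMonoidAlgebra ℝ ℤ) : ℝ := (lcoeff p).sum fun _ c => c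

/-- A real Laurent polynomial viewed as a complex Laurent polynomial. -/
noncomputable def toC (p : AddMonoidAlgebra ℝ ℤ) : AddMonoidAlgebra ℂ ℤ :=
  AddMonoidAlgebra.ofCoeff (Finsupp.mapRange (fun r : ℝ => (r : ℂ)) Complex.ofReal_zero (lcoeff p))

/-- The `k`-th eigenvalue polynomial `p_{k,j} = ∑_g ζ^{kg}·q_{j,g}` of a circulant
family, `ζ = exp(2πi/n)`. -/
noncomputable def eigpoly (n : ℕ) (q : ℕ → ZMod n → AddMonoidAlgebra ℝ ℤ) [NeZero n]
    (k : ZMod n) (j : ℕ) : AddMonoidAlgebra ℂ ℤ :=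
  ∑ g : ZMod n, (Complex.exp (2 * Real.pi * Complex.I / n)) ^ ((k * g).val) • toC (q j g)

/-! Symmetrizing in `(g, h)`, the product `p_{k,j} p_{l,j} = ∑_{g,h} ζ^{kg+lh} q_{j,g} q_{j,h}`
has coefficients `(ζ^{kg+lh} + ζ^{kh+lg}) / 2`, of modulus `|1 + ζ^{(k-l)(g-h)}| / 2`, which is at
most some `b < 1` as soon as `(k - l)(g - h) ≠ 0`. Hence `‖p_{k,j} p_{l,j}‖₁ ≤ 1 - (1 - b) t_j`,
where `t_j` is the `j`-th term of the divergent series of weak ergodicity, and the product over `j`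
tends to `0` because `∏ (1 - c t_j) ≤ exp (-c ∑ t_j)`. The summand `k = l` is the squared sequence,
and `‖·‖₁` is subadditive. -/

open Finset

lemma l1C_nonneg (p : AddMonoidAlgebra ℂ ℤ) : 0 ≤ l1C p :=
  Finsupp.sum_nonneg fun _ _ => norm_nonneg _

lemma l1C_add_le (p q : AddMonoidAlgebra ℂ ℤ) : l1C (p + q) ≤ l1C p + l1C q := by
  classical
  set s := (lcoeffC p).support ∪ (lcoeffC q).support
  have hsupp : (lcoeffC (p + q)).support ⊆ s := Finsupp.support_add
  simp only [l1C]
  rw [Finsupp.sum_of_support_subset _ hsupp _ fun _ _ => norm_zero,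
    Finsupp.sum_of_support_subset _ subset_union_left _ fun _ _ => norm_zero,
    Finsupp.sum_of_support_subset _ subset_union_right _ fun _ _ => norm_zero, ← sum_add_distrib]
  exact sum_le_sum fun _ _ => norm_add_le _ _

lemma l1C_sum_le {ι : Type*} (s : Finset ι) (f : ι → AddMonoidAlgebra ℂ ℤ) :
    l1C (∑ i ∈ s, f i) ≤ ∑ i ∈ s, l1C (f i) :=
  Finset.le_sum_of_subadditive l1C (by simp [l1C, lcoeffC]) l1C_add_le s f

lemma l1C_smul (c : ℂ) (p : AddMonoidAlgebra ℂ ℤ) : l1C (c • p) = ‖c‖ * l1C p := by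
  simp only [l1C, lcoeffC, AddMonoidAlgebra.coeff_smul]
  rw [Finsupp.sum_smul_index fun _ => norm_zero, Finsupp.mul_sum]
  simp only [norm_mul]

lemma l1C_single (a : ℤ) (c : ℂ) : l1C (AddMonoidAlgebra.single a c) = ‖c‖ :=
  Finsupp.sum_single_index norm_zero

lemma l1C_one : l1C 1 = 1 := by
  rw [AddMonoidAlgebra.one_def, l1C_single, norm_one]

lemma l1C_mul_le (p q : AddMonoidAlgebra ℂ ℤ) : l1C (p * q) ≤ l1C p * l1C q := by
  calc l1C (p * q) ≤ ∑ a ∈ p.coeff.support, ∑ b ∈ q.coeff.support, ‖p.coeff a * q.coeff b‖ := by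
        rw [AddMonoidAlgebra.mul_def]
        simp only [Finsupp.sum]
        refine (l1C_sum_le _ _).trans <| sum_le_sum fun a _ => ?_
        refine (l1C_sum_le _ _).trans <| sum_le_sum fun b _ => ?_
        exact (l1C_single _ _).le
    _ = l1C p * l1C q := by simp only [l1C, lcoeffC, Finsupp.sum, sum_mul_sum, norm_mul]

lemma l1C_prod_le {ι : Type*} (s : Finset ι) (f : ι → AddMonoidAlgebra ℂ ℤ) :
    l1C (∏ i ∈ s, f i) ≤ ∏ i ∈ s, l1C (f i) := by
  induction s using Finset.cons_induction with
  | empty => simp [l1C_one]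
  | cons a s ha ih =>
    rw [prod_cons, prod_cons]
    exact (l1C_mul_le _ _).trans (mul_le_mul_of_nonneg_left ih (l1C_nonneg _))

lemma ev1_nonneg {p : AddMonoidAlgebra ℝ ℤ} (hp : ∀ m, 0 ≤ lcoeff p m) : 0 ≤ ev1 p :=
  Finsupp.sum_nonneg fun m _ => hp m

lemma l1C_toC {p : AddMonoidAlgebra ℝ ℤ} (hp : ∀ m, 0 ≤ lcoeff p m) : l1C (toC p) = ev1 p := by
  rw [l1C, toC, lcoeffC, AddMonoidAlgebra.coeff_ofCoeff,
    Finsupp.sum_mapRange_index fun _ => norm_zero, ev1]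
  exact Finsupp.sum_congr fun m _ => by rw [Complex.norm_real, Real.norm_of_nonneg (hp m)]

lemma sum_sum_smul_eq_sum_sum_symm_smul {ι K M : Type*} [Fintype ι] [Field K] [CharZero K]
    [AddCommGroup M] [Module K M] (x : ι → ι → K) {B : ι → ι → M} (hB : ∀ g h, B g h = B h g) :
    ∑ g, ∑ h, x g h • B g h = ∑ g, ∑ h, ((x g h + x h g) / 2) • B g h := by
  have hswap : ∑ g, ∑ h, x h g • B g h = ∑ g, ∑ h, x g h • B g h := by
    rw [Finset.sum_comm]
    simp only [hB]
  symm
  calc ∑ g, ∑ h, ((x g h + x h g) / 2) • B g h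
      = (2 : K)⁻¹ • (∑ g, ∑ h, x g h • B g h + ∑ g, ∑ h, x h g • B g h) := by
        simp only [Finset.smul_sum, ← Finset.sum_add_distrib, div_eq_inv_mul, mul_smul, add_smul,
          smul_add]
    _ = _ := by rw [hswap, ← two_smul K, smul_smul, inv_mul_cancel₀ two_ne_zero, one_smul]

lemma exists_lt_one_forall_le {ι : Type*} [Finite ι] {P : ι → Prop} {f : ι → ℝ}
    (hf : ∀ i, P i → f i < 1) : ∃ b < 1, ∀ i, P i → f i ≤ b := by
  have hev : ∀ᶠ b in nhdsWithin (1 : ℝ) (Set.Iio 1), ∀ i, P i → f i ≤ b := by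
    refine Filter.eventually_all.2 fun i => ?_
    by_cases hi : P i
    · exact ((eventually_gt_nhds (hf i hi)).filter_mono nhdsWithin_le_nhds).mono
        fun b hb _ => hb.le
    · exact Filter.Eventually.of_forall fun _ hP => absurd hP hi
  exact (hev.and self_mem_nhdsWithin).exists.imp fun b hb => ⟨hb.2, hb.1⟩

lemma AddChar.exists_norm_one_add_le {R : Type*} [AddMonoid R] [Finite R] {ψ : AddChar R Circle}
    (hψ : Function.Injective ψ) : ∃ b < 1, ∀ u, u ≠ 0 → ‖1 + (ψ u : ℂ)‖ ≤ 2 * b := by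
  have hlt : ∀ u, u ≠ 0 → ‖1 + (ψ u : ℂ)‖ / 2 < 1 := by
    intro u hu
    have hne : (1 : ℂ) ≠ ψ u := fun h => hu (hψ (by ext; simp [← h]))
    have hnorm : ‖(1 : ℂ)‖ = ‖(ψ u : ℂ)‖ := by rw [norm_one, Circle.norm_coe]
    have := norm_add_lt_of_not_sameRay fun hr => hne (hr.eq_of_norm_eq hnorm)
    rw [← hnorm, norm_one] at this
    linarith
  obtain ⟨b, hb1, hb⟩ := exists_lt_one_forall_le hlt
  exact ⟨b, hb1, fun u hu => by linarith [hb u hu]⟩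

section Fourier

variable {R : Type*} [CommRing R]

noncomputable def fourierPoly [Fintype R] (ψ : AddChar R Circle) (a : R → AddMonoidAlgebra ℝ ℤ)
    (k : R) : AddMonoidAlgebra ℂ ℤ :=
  ∑ g, (ψ (k * g) : ℂ) • toC (a g)

lemma fourierPoly_mul_fourierPoly [Fintype R] (ψ : AddChar R Circle)
    (a : R → AddMonoidAlgebra ℝ ℤ) (k l : R) :
    fourierPoly ψ a k * fourierPoly ψ a l =
      ∑ g, ∑ h, (((ψ (k * g + l * h) : ℂ) + ψ (k * h + l * g)) / 2) • (toC (a g) * toC (a h)) := by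
  calc fourierPoly ψ a k * fourierPoly ψ a l
      = ∑ g, ∑ h, (ψ (k * g + l * h) : ℂ) • (toC (a g) * toC (a h)) := by
        simp only [fourierPoly, sum_mul_sum, smul_mul_smul_comm, AddChar.map_add_eq_mul,
          Circle.coe_mul]
    _ = _ := sum_sum_smul_eq_sum_sum_symm_smul _ fun g h => mul_comm _ _

lemma norm_add_addChar_eq (ψ : AddChar R Circle) (k l g h : R) :
    ‖(ψ (k * g + l * h) : ℂ) + ψ (k * h + l * g)‖ = ‖1 + (ψ ((k - l) * (g - h)) : ℂ)‖ := by
  have hshift : k * g + l * h = (k * h + l * g) + (k - l) * (g - h) := by ring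
  rw [hshift, AddChar.map_add_eq_mul, Circle.coe_mul, ← mul_add_one, norm_mul,
    Circle.norm_coe, one_mul, add_comm]

lemma l1C_sum_sum_smul_toC_mul_le {ι : Type*} [Fintype ι] {a : ι → AddMonoidAlgebra ℝ ℤ}
    (ha : ∀ g m, 0 ≤ lcoeff (a g) m) (w : ι → ι → ℂ) :
    l1C (∑ g, ∑ h, w g h • (toC (a g) * toC (a h))) ≤
      ∑ g, ∑ h, ‖w g h‖ * (ev1 (a g) * ev1 (a h)) := by
  refine (l1C_sum_le _ _).trans <| sum_le_sum fun g _ => (l1C_sum_le _ _).trans <|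
    sum_le_sum fun h _ => ?_
  rw [l1C_smul, ← l1C_toC (ha g), ← l1C_toC (ha h)]
  exact mul_le_mul_of_nonneg_left (l1C_mul_le _ _) (norm_nonneg _)

lemma l1C_fourierPoly_mul_le [Fintype R] [DecidableEq R] (ψ : AddChar R Circle)
    {a : R → AddMonoidAlgebra ℝ ℤ} (ha : ∀ g m, 0 ≤ lcoeff (a g) m) (hsum : ∑ g, ev1 (a g) = 1)
    {b : ℝ} (hb : ∀ u, u ≠ 0 → ‖1 + (ψ u : ℂ)‖ ≤ 2 * b) (k l : R) :
    l1C (fourierPoly ψ a k * fourierPoly ψ a l) ≤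
      1 - (1 - b) * ∑ g, ∑ h, if (k - l) * (g - h) ≠ 0 then ev1 (a g) * ev1 (a h) else 0 := by
  have hterm : ∀ g h, ‖((ψ (k * g + l * h) : ℂ) + ψ (k * h + l * g)) / 2‖ *
      (ev1 (a g) * ev1 (a h)) ≤ ev1 (a g) * ev1 (a h) -
        (1 - b) * if (k - l) * (g - h) ≠ 0 then ev1 (a g) * ev1 (a h) else 0 := by
    intro g h
    have hmass : 0 ≤ ev1 (a g) * ev1 (a h) := mul_nonneg (ev1_nonneg (ha g)) (ev1_nonneg (ha h))
    rw [norm_div, norm_add_addChar_eq, Complex.norm_two]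
    split_ifs with hu
    · nlinarith [hb _ hu]
    · have := norm_add_le (1 : ℂ) (ψ ((k - l) * (g - h)))
      rw [norm_one, Circle.norm_coe] at this
      nlinarith
  calc l1C (fourierPoly ψ a k * fourierPoly ψ a l)
      ≤ ∑ g, ∑ h, ‖((ψ (k * g + l * h) : ℂ) + ψ (k * h + l * g)) / 2‖ *
          (ev1 (a g) * ev1 (a h)) := by
        rw [fourierPoly_mul_fourierPoly]
        exact l1C_sum_sum_smul_toC_mul_le ha _
    _ ≤ ∑ g, ∑ h, (ev1 (a g) * ev1 (a h) -
          (1 - b) * if (k - l) * (g - h) ≠ 0 then ev1 (a g) * ev1 (a h) else 0) :=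
        sum_le_sum fun g _ => sum_le_sum fun h _ => hterm g h
    _ = _ := by simp only [Finset.sum_sub_distrib, ← Finset.mul_sum, hsum, mul_one]

end Fourier

lemma tendsto_sum_Icc_atTop_of_not_summable {t : ℕ → ℝ} (ht : ∀ j, 0 ≤ t j)
    (hdiv : ¬ Summable t) (j₀ : ℕ) :
    Tendsto (fun d => ∑ j ∈ Icc j₀ (j₀ + d), t j) atTop atTop := by
  have hshift : ¬ Summable fun i => t (j₀ + i) := by
    simpa only [add_comm j₀] using (summable_nat_add_iff j₀).not.mpr hdiv
  refine (((not_summable_iff_tendsto_nat_atTop_of_nonneg fun i => ht _).mp hshift).comp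
    (tendsto_add_atTop_nat 1)).congr fun d => ?_
  rw [Function.comp_apply, ← Ico_add_one_right_eq_Icc, sum_Ico_eq_sum_range]
  congr 2
  omega

lemma tendsto_prod_Icc_zero_of_le_one_sub_mul {a t : ℕ → ℝ} {c : ℝ} (hc : 0 < c)
    (ha0 : ∀ j, 0 ≤ a j) (ha : ∀ j, a j ≤ 1 - c * t j) (ht : ∀ j, 0 ≤ t j)
    (hdiv : ¬ Summable t) (j₀ : ℕ) :
    Tendsto (fun d => ∏ j ∈ Icc j₀ (j₀ + d), a j) atTop (nhds 0) := by
  have hexp : ∀ s : Finset ℕ, ∏ j ∈ s, a j ≤ Real.exp (-(c * ∑ j ∈ s, t j)) := fun s => calc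
    ∏ j ∈ s, a j ≤ ∏ j ∈ s, Real.exp (-(c * t j)) :=
        prod_le_prod (fun j _ => ha0 j) fun j _ =>
          (ha j).trans (by linarith [Real.add_one_le_exp (-(c * t j))])
    _ = Real.exp (-(c * ∑ j ∈ s, t j)) := by
        rw [← Real.exp_sum, Finset.sum_neg_distrib, Finset.mul_sum]
  refine squeeze_zero (fun _ => prod_nonneg fun j _ => ha0 j) (fun _ => hexp _) ?_
  exact Real.tendsto_exp_atBot.comp <| tendsto_neg_atTop_atBot.comp <|
    (tendsto_sum_Icc_atTop_of_not_summable ht hdiv j₀).const_mul_atTop hc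

lemma eigpoly_eq_fourierPoly (n : ℕ) [NeZero n] (q : ℕ → ZMod n → AddMonoidAlgebra ℝ ℤ)
    (k : ZMod n) (j : ℕ) : eigpoly n q k j = fourierPoly ZMod.toCircle (q j) k := by
  refine Finset.sum_congr rfl fun g _ => ?_
  rw [ZMod.toCircle_apply, ← Complex.exp_nat_mul]
  ring_nf

open scoped Classical in
/-- The forward direction of Proposition 2.10 for circulant matrices: if the sequence is
weakly ergodic and the squared sequence is hollow, then the sequence
`tr(M^{(i)})·M^{(i)}` is hollow; at the level of eigenvalue polynomials, the `l¹` norms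
`‖∑_k ∏_{j=j₀}^{j₀+d} p_{k,j} p_{l,j}‖₁` tend to `0` for every `l ≠ 0`. -/
theorem trace_times_matrix_hollow (n : ℕ) [NeZero n]
    (q : ℕ → ZMod n → AddMonoidAlgebra ℝ ℤ)
    (hpos : ∀ j g m, 0 ≤ lcoeff (q j g) m)
    (hsum : ∀ j, ∑ g, ev1 (q j g) = 1)
    (herg : ∀ k l : ZMod n, k ≠ l →
      ¬ Summable (fun j => ∑ g : ZMod n, ∑ h : ZMod n,
        if (k - l) * (g - h) ≠ 0 then ev1 (q j g) * ev1 (q j h) else 0))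
    (hhollow : ∀ k : ZMod n, k ≠ 0 → ∀ j₀ : ℕ,
      Tendsto (fun d => l1C (∏ j ∈ Finset.Icc j₀ (j₀ + d), (eigpoly n q k j) ^ 2))
        atTop (nhds 0)) :
    ∀ l : ZMod n, l ≠ 0 → ∀ j₀ : ℕ,
      Tendsto
        (fun d => l1C (∑ k : ZMod n,
          ∏ j ∈ Finset.Icc j₀ (j₀ + d), (eigpoly n q k j * eigpoly n q l j)))
        atTop (nhds 0) := by
  intro l hl j₀
  obtain ⟨b, hb1, hb⟩ := AddChar.exists_norm_one_add_le (ZMod.injective_toCircle (N := n))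
  have hfactor : ∀ k, Tendsto
      (fun d => l1C (∏ j ∈ Icc j₀ (j₀ + d), (eigpoly n q k j * eigpoly n q l j)))
      atTop (nhds 0) := by
    intro k
    rcases eq_or_ne k l with rfl | hkl
    · simpa only [sq] using hhollow k hl j₀
    refine squeeze_zero (fun _ => l1C_nonneg _) (fun _ => l1C_prod_le _ _) <|
      tendsto_prod_Icc_zero_of_le_one_sub_mul (sub_pos.2 hb1) (fun _ => l1C_nonneg _)
        (fun j => ?_) (fun j => ?_) (herg k l hkl) j₀
    · simpa only [eigpoly_eq_fourierPoly] using
        l1C_fourierPoly_mul_le _ (hpos j) (hsum j) hb k l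
    · exact Finset.sum_nonneg fun g _ => Finset.sum_nonneg fun h _ =>
        ite_nonneg (mul_nonneg (ev1_nonneg (hpos j g)) (ev1_nonneg (hpos j h))) le_rfl
  refine squeeze_zero (fun _ => l1C_nonneg _) (fun _ => l1C_sum_le _ _) ?_
  simpa using tendsto_finsetSum Finset.univ fun k _ => hfactor k
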